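/- Let (A,(p_l)) be a self-induced Fréchet algebra and let n ∈ ℕ. If A is 2n-weakly amenable, then the unitization A# is 2n-weakly amenable. -/

import Mathlib

noncomputable section

open Filter Topology

/-- A topological `ℂ`-module `X` equipped with left and right actions of `A`,
each acting by continuous linear maps on `X`.  This is the data underlying a
locally convex `A`-bimodule. -/
structure BiMod (A : Type) : Type 1 where
  X : Type
  [ag : AddCommGroup X]
  [md : Module ℂ X]
  [ts : TopologicalSpace X]
  l : A → X →L[ℂ] X
  r : A → X →L[ℂ] X

attribute [instance] BiMod.ag BiMod.md BiMod.ts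

namespace BiMod

variable {A : Type}

/-- The strong dual of a bimodule, with the canonical dual actions
`⟨a·f, x⟩ = ⟨f, x·a⟩` and `⟨f·a, x⟩ = ⟨f, a·x⟩`.  The dual carries the strong
topology (uniform convergence on von Neumann bounded sets), which is the default
topology on `X →L[ℂ] ℂ` in Mathlib. -/
def dual (M : BiMod A) : BiMod A where
  X := M.X →L[ℂ] ℂ
  l a := ContinuousLinearMap.precomp ℂ (M.r a)
  r a := ContinuousLinearMap.precomp ℂ (M.l a)

/-- The `n`-th iterated strong dual of a bimodule (`iterDual M 0 = M`). -/
def iterDual (M : BiMod A) : ℕ → BiMod A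
  | 0 => M
  | n + 1 => (M.iterDual n).dual

instance dualCSM (M : BiMod A) : ContinuousSMul ℂ (M.dual).X :=
  inferInstanceAs (ContinuousSMul ℂ (M.X →L[ℂ] ℂ))

/-- Evaluation (canonical) embedding of a bimodule into its double dual. -/
def evalEmbed (M : BiMod A) [ContinuousSMul ℂ M.X] (x : M.X) : M.dual.dual.X :=
  show (M.X →L[ℂ] ℂ) →L[ℂ] ℂ from
    ⟨⟨⟨fun f => f x, fun _ _ => rfl⟩, fun _ _ => rfl⟩, continuous_eval_const x⟩

/-- `ContinuousSMul` holds at every level of the iterated dual. -/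
def iterCSM (M : BiMod A) (h : ContinuousSMul ℂ M.X) :
    ∀ n, ContinuousSMul ℂ (M.iterDual n).X
  | 0 => h
  | n + 1 => inferInstanceAs (ContinuousSMul ℂ ((M.iterDual n).X →L[ℂ] ℂ))

/-- The canonical (iterated evaluation) embedding `M → M^(2n)`. -/
def iterEmbed (M : BiMod A) (h : ContinuousSMul ℂ M.X) :
    ∀ n : ℕ, M.X → (M.iterDual (2 * n)).X
  | 0, x => x
  | n + 1, x =>
    haveI := M.iterCSM h (2 * n)
    (M.iterDual (2 * n)).evalEmbed (M.iterEmbed h n x)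

/-- The pairing between the `(k+1)`-st dual and the `k`-th dual. -/
def pairApply (M : BiMod A) (k : ℕ) (F : (M.iterDual (k + 1)).X)
    (x : (M.iterDual k).X) : ℂ := (show (M.iterDual k).X →L[ℂ] ℂ from F) x

end BiMod

section Defs

variable (A : Type) [NonUnitalRing A] [Module ℂ A] [SMulCommClass ℂ A A] [IsScalarTower ℂ A A]
  [TopologicalSpace A] [IsTopologicalAddGroup A] [ContinuousSMul ℂ A] [ContinuousMul A]

/-- A continuous derivation from `A` into a bimodule. -/
def IsContDerivation (M : BiMod A) (D : A →L[ℂ] M.X) : Prop :=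
  ∀ a b : A, D (a * b) = M.l a (D b) + M.r b (D a)

/-- An inner derivation : `D a = a·x - x·a` for some `x`. -/
def IsInnerDerivation (M : BiMod A) (D : A →L[ℂ] M.X) : Prop :=
  ∃ x : M.X, ∀ a : A, D a = M.l a x - M.r a x

/-- `A` as a bimodule over itself, via left/right multiplication. -/
def selfBiMod : BiMod A where
  X := A
  l a := ⟨LinearMap.mulLeft ℂ a, continuous_mul_left a⟩
  r a := ⟨LinearMap.mulRight ℂ a, continuous_mul_right a⟩

/-- `A` is `n`-weakly amenable if every continuous derivation from `A` into the
`n`-th iterated strong dual `A^(n)` (with the canonical module actions) is inner. -/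
def NWeaklyAmenable (n : ℕ) : Prop :=
  ∀ D : A →L[ℂ] ((selfBiMod A).iterDual n).X,
    IsContDerivation A ((selfBiMod A).iterDual n) D →
      IsInnerDerivation A ((selfBiMod A).iterDual n) D

/-- A closed two-sided ideal `I` of `A` (a closed `ℂ`-subalgebra which absorbs
multiplication on both sides) as an `A`-bimodule. -/
def idealBiMod (I : NonUnitalSubalgebra ℂ A)
    (hl : ∀ a : A, ∀ x ∈ I, a * x ∈ I) (hr : ∀ a : A, ∀ x ∈ I, x * a ∈ I) : BiMod A where
  X := ↥I
  l a := ⟨{ toFun := fun x => (⟨a * (x : A), hl a x x.2⟩ : ↥I)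
            map_add' := fun x y => by ext; simp [mul_add]
            map_smul' := fun c x => by ext; simp [mul_smul_comm] },
          (Continuous.subtype_mk ((continuous_mul_left a).comp continuous_subtype_val) _)⟩
  r a := ⟨{ toFun := fun x => (⟨(x : A) * a, hr a x x.2⟩ : ↥I)
            map_add' := fun x y => by ext; simp [add_mul]
            map_smul' := fun c x => by ext; simp [smul_mul_assoc] },
          (Continuous.subtype_mk ((continuous_mul_right a).comp continuous_subtype_val) _)⟩

/-- `A` is `n`-ideally amenable if for every closed two-sided ideal `I` of `A`,
every continuous derivation from `A` into `I^(n)` is inner. -/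
def NIdeallyAmenable (n : ℕ) : Prop :=
  ∀ (I : NonUnitalSubalgebra ℂ A), IsClosed (I : Set A) →
    ∀ (hl : ∀ a : A, ∀ x ∈ I, a * x ∈ I) (hr : ∀ a : A, ∀ x ∈ I, x * a ∈ I),
      ∀ D : A →L[ℂ] ((idealBiMod A I hl hr).iterDual n).X,
        IsContDerivation A ((idealBiMod A I hl hr).iterDual n) D →
          IsInnerDerivation A ((idealBiMod A I hl hr).iterDual n) D

/-- The topology of `A` is generated by an increasing sequence of submultiplicative
seminorms.  Together with completeness and Hausdorffness this says that `A` is a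
Fréchet algebra. -/
def FrechetSeminorms : Prop :=
  ∃ p : SeminormFamily ℂ A ℕ, WithSeminorms p ∧ (∀ n, p n ≤ p (n + 1)) ∧
    ∀ (n : ℕ) (x y : A), p n (x * y) ≤ p n x * p n y

/-- `A` has an identity element. -/
def HasIdentity : Prop := ∃ e : A, ∀ a : A, e * a = a ∧ a * e = a

end Defs

section Montel

variable (E : Type) [AddCommGroup E] [Module ℂ E] [TopologicalSpace E]

/-- A Montel space: a barrelled locally convex Hausdorff space in which every closed
(von Neumann) bounded subset is compact. -/
def IsMontelSpace : Prop :=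
  LocallyConvexSpace ℝ E ∧ T2Space E ∧ BarrelledSpace ℂ E ∧
    ∀ s : Set E, IsClosed s → Bornology.IsVonNBounded ℂ s → IsCompact s

end Montel

section More

variable (A : Type) [NonUnitalRing A] [Module ℂ A] [SMulCommClass ℂ A A] [IsScalarTower ℂ A A]
  [TopologicalSpace A] [IsTopologicalAddGroup A] [ContinuousSMul ℂ A] [ContinuousMul A]

/-- A bounded approximate identity: a bounded net `(e_i)` with `e_i * a → a` and
`a * e_i → a` for every `a`. -/
def HasBoundedApproxIdentity : Prop :=
  ∃ (ι : Type) (_ : Preorder ι) (_ : IsDirected ι (· ≤ ·)) (_ : Nonempty ι) (e : ι → A),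
    Bornology.IsVonNBounded ℂ (Set.range e) ∧
      ∀ a : A, Tendsto (fun i => e i * a) atTop (𝓝 a) ∧
        Tendsto (fun i => a * e i) atTop (𝓝 a)

/-- `A` is essential: the linear span of products is dense. -/
def IsEssential : Prop :=
  Dense ((Submodule.span ℂ {x : A | ∃ a b : A, x = a * b} : Submodule ℂ A) : Set A)

/-- `A` is self-induced: it is essential and every balanced bilinear functional
`φ` (i.e. `φ (a*c) b = φ a (c*b)`) is of the form `φ a b = f (a*b)` for some
continuous linear functional `f`. -/
def SelfInduced : Prop :=
  IsEssential A ∧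
    ∀ φ : A →ₗ[ℂ] A →ₗ[ℂ] ℂ, (∀ a b c : A, φ (a * c) b = φ a (c * b)) →
      ∃ f : A →L[ℂ] ℂ, ∀ a b : A, φ a b = f (a * b)

/-- The data of `M : BiMod A` constitutes a genuine locally convex `A`-bimodule:
the actions satisfy the bimodule laws, are `ℂ`-bilinear, jointly continuous, and
`M.X` is locally convex. -/
structure IsLCBimod (M : BiMod A) : Prop where
  lc : LocallyConvexSpace ℝ M.X
  l_mul : ∀ (a b : A) (x : M.X), M.l (a * b) x = M.l a (M.l b x)
  r_mul : ∀ (a b : A) (x : M.X), M.r (a * b) x = M.r b (M.r a x)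
  l_add : ∀ (a b : A) (x : M.X), M.l (a + b) x = M.l a x + M.l b x
  r_add : ∀ (a b : A) (x : M.X), M.r (a + b) x = M.r a x + M.r b x
  l_smul : ∀ (c : ℂ) (a : A) (x : M.X), M.l (c • a) x = c • M.l a x
  r_smul : ∀ (c : ℂ) (a : A) (x : M.X), M.r (c • a) x = c • M.r a x
  lr_comm : ∀ (a b : A) (x : M.X), M.l a (M.r b x) = M.r b (M.l a x)
  cont_l : Continuous fun q : A × M.X => M.l q.1 q.2
  cont_r : Continuous fun q : A × M.X => M.r q.1 q.2

/-- `A` is amenable: for every locally convex `A`-bimodule `X`, every continuous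
derivation from `A` into the strong dual `X*` (with the canonical dual actions)
is inner. -/
def Amenable : Prop :=
  ∀ M : BiMod A, IsLCBimod A M →
    ∀ D : A →L[ℂ] M.dual.X, IsContDerivation A M.dual D → IsInnerDerivation A M.dual D

end More

section UnitizationInstances

variable (A : Type) [NonUnitalRing A] [Module ℂ A] [SMulCommClass ℂ A A] [IsScalarTower ℂ A A]
  [TopologicalSpace A] [IsTopologicalAddGroup A] [ContinuousSMul ℂ A] [ContinuousMul A]

/-- The unitization `A# = ℂ ⊕ A` carries the product topology, which is the topology
generated by the seminorms `q_l (a, λ) = p_l a + |λ|`. -/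
instance : TopologicalSpace (Unitization ℂ A) :=
  TopologicalSpace.induced Unitization.toProd inferInstance

instance : IsTopologicalAddGroup (Unitization ℂ A) where
  continuous_add := by
    refine continuous_induced_rng.2 ?_
    show Continuous fun p : Unitization ℂ A × Unitization ℂ A => p.1.toProd + p.2.toProd
    exact (continuous_induced_dom.comp continuous_fst).add (continuous_induced_dom.comp continuous_snd)
  continuous_neg := by
    refine continuous_induced_rng.2 ?_
    show Continuous fun p : Unitization ℂ A => -p.toProd
    exact continuous_induced_dom.neg

instance : ContinuousSMul ℂ (Unitization ℂ A) where
  continuous_smul := by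
    refine continuous_induced_rng.2 ?_
    show Continuous fun p : ℂ × Unitization ℂ A => p.1 • p.2.toProd
    exact continuous_fst.smul (continuous_induced_dom.comp continuous_snd)

instance : ContinuousMul (Unitization ℂ A) where
  continuous_mul := by
    refine continuous_induced_rng.2 ?_
    have h : Continuous fun p : (ℂ × A) × ℂ × A =>
      ((p.1.1 * p.2.1, p.1.1 • p.2.2 + p.2.1 • p.1.2 + p.1.2 * p.2.2) : ℂ × A) := by fun_prop
    have hp : Continuous fun p : Unitization ℂ A × Unitization ℂ A => (p.1.toProd, p.2.toProd) :=
      (continuous_induced_dom.comp continuous_fst).prodMk (continuous_induced_dom.comp continuous_snd)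
    show Continuous fun p : Unitization ℂ A × Unitization ℂ A => (p.1 * p.2).toProd
    exact h.comp hp

end UnitizationInstances

/-!
Write `A# = ℂ × A`; dualising, `(A#)^(k) ≃ ℂ × A^(k)` for every `k`. Through this splitting,
an element `a ∈ A` acts on even levels by `a · (λ, x) = (0, a · x + λ a)`, with `a` canonically
embedded in `A^(k)`, and on odd levels by `a · (λ, f) = (⟨f, a⟩, a · f)` (similarly on the right).
So for a derivation `D : A# → (A#)^(2n)`, the `ℂ`-component of `D ∘ inr` vanishes on products,
hence on `A` since `A` is essential, and its `A^(2n)`-component is a derivation of `A`, implemented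
by some `F` by hypothesis. Then `(0, F)` implements `D` on `A`, and `D 1 = 0` does the rest.
-/

namespace BiMod

variable {B : Type}

/-- Dualising swaps the left and right actions, so indexing them by a `Bool` lets one argument
handle both. -/
def act (M : BiMod B) : Bool → B → M.X →L[ℂ] M.X
  | true => M.l
  | false => M.r

lemma dual_act (M : BiMod B) (s : Bool) (b : B) :
    M.dual.act s b = ContinuousLinearMap.precomp ℂ (M.act (!s) b) := by
  cases s <;> rfl

lemma dual_act_add [Add B] (M : BiMod B) (s : Bool) {u v : B}
    (h : ∀ x : M.X, M.act (!s) (u + v) x = M.act (!s) u x + M.act (!s) v x)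
    (f : M.X →L[ℂ] ℂ) : M.dual.act s (u + v) f = M.dual.act s u f + M.dual.act s v f := by
  rw [dual_act, dual_act, dual_act]
  refine ContinuousLinearMap.ext fun x => ?_
  show f (M.act (!s) (u + v) x) = f (M.act (!s) u x) + f (M.act (!s) v x)
  rw [h, map_add]

lemma dual_act_eq_smul (M : BiMod B) (s : Bool) {b : B} {c : ℂ}
    (h : ∀ x : M.X, M.act (!s) b x = c • x) (f : M.X →L[ℂ] ℂ) : M.dual.act s b f = c • f := by
  rw [dual_act]
  refine ContinuousLinearMap.ext fun x => ?_
  show f (M.act (!s) b x) = c • f x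
  rw [h, map_smul]

instance instIsTopologicalAddGroupIterDual (M : BiMod B) [IsTopologicalAddGroup M.X] (k : ℕ) :
    IsTopologicalAddGroup (M.iterDual k).X := by
  cases k with
  | zero => assumption
  | succ k => exact inferInstanceAs (IsTopologicalAddGroup ((M.iterDual k).X →L[ℂ] ℂ))

instance instContinuousSMulIterDual (M : BiMod B) [h : ContinuousSMul ℂ M.X] (k : ℕ) :
    ContinuousSMul ℂ (M.iterDual k).X :=
  M.iterCSM h k

section PairApply

variable (M : BiMod B) (k : ℕ)

lemma pairApply_act (s : Bool) (b : B) (f : (M.iterDual (k + 1)).X) (x : (M.iterDual k).X) :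
    M.pairApply k ((M.iterDual (k + 1)).act s b f) x
      = M.pairApply k f ((M.iterDual k).act (!s) b x) := by
  cases s <;> rfl

@[simp] lemma pairApply_add_left (f g : (M.iterDual (k + 1)).X) (x : (M.iterDual k).X) :
    M.pairApply k (f + g) x = M.pairApply k f x + M.pairApply k g x := rfl

@[simp] lemma pairApply_smul_left (c : ℂ) (f : (M.iterDual (k + 1)).X) (x : (M.iterDual k).X) :
    M.pairApply k (c • f) x = c * M.pairApply k f x := rfl

@[simp] lemma pairApply_add_right (f : (M.iterDual (k + 1)).X) (x y : (M.iterDual k).X) :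
    M.pairApply k f (x + y) = M.pairApply k f x + M.pairApply k f y :=
  map_add (show (M.iterDual k).X →L[ℂ] ℂ from f) x y

@[simp] lemma pairApply_smul_right (f : (M.iterDual (k + 1)).X) (c : ℂ) (x : (M.iterDual k).X) :
    M.pairApply k f (c • x) = c * M.pairApply k f x :=
  map_smul (show (M.iterDual k).X →L[ℂ] ℂ from f) c x

lemma pairApply_injective : Function.Injective (M.pairApply k) :=
  fun _ _ h => ContinuousLinearMap.ext fun x => congrFun h x

end PairApply

end BiMod

section SelfBiMod

variable {B : Type} [NonUnitalRing B] [Module ℂ B] [SMulCommClass ℂ B B] [IsScalarTower ℂ B B]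
  [TopologicalSpace B] [ContinuousMul B]

lemma selfBiMod_iterDual_act_add (k : ℕ) (s : Bool) (u v : B)
    (x : ((selfBiMod B).iterDual k).X) :
    ((selfBiMod B).iterDual k).act s (u + v) x
      = ((selfBiMod B).iterDual k).act s u x + ((selfBiMod B).iterDual k).act s v x := by
  induction k generalizing s with
  | zero => revert x; cases s; exacts [fun x : B => mul_add x u v, fun x : B => add_mul u v x]
  | succ k ih => exact BiMod.dual_act_add _ s (ih !s) x

lemma selfBiMod_iterDual_act_eq_smul {b : B} {c : ℂ} (hl : ∀ x : B, b * x = c • x)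
    (hr : ∀ x : B, x * b = c • x) (k : ℕ) (s : Bool) (x : ((selfBiMod B).iterDual k).X) :
    ((selfBiMod B).iterDual k).act s b x = c • x := by
  induction k generalizing s with
  | zero => revert x; cases s; exacts [hr, hl]
  | succ k ih => exact BiMod.dual_act_eq_smul _ s (ih !s) x

end SelfBiMod

lemma IsContDerivation.map_one {B : Type} [Ring B] [Module ℂ B] [SMulCommClass ℂ B B]
    [IsScalarTower ℂ B B] [TopologicalSpace B] [ContinuousMul B] {k : ℕ}
    {D : B →L[ℂ] ((selfBiMod B).iterDual k).X}
    (hD : IsContDerivation B ((selfBiMod B).iterDual k) D) : D 1 = 0 := by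
  have h1 (s : Bool) (x : ((selfBiMod B).iterDual k).X) :
      ((selfBiMod B).iterDual k).act s 1 x = x :=
    (selfBiMod_iterDual_act_eq_smul (fun x => (one_mul x).trans (one_smul ℂ x).symm)
      (fun x => (mul_one x).trans (one_smul ℂ x).symm) k s x).trans (one_smul ℂ x)
  have h := hD 1 1
  rw [mul_one] at h
  change D 1 = ((selfBiMod B).iterDual k).act true 1 (D 1)
    + ((selfBiMod B).iterDual k).act false 1 (D 1) at h
  rwa [h1, h1, left_eq_add] at h

lemma IsEssential.ext_of_map_mul {A : Type} [NonUnitalRing A] [Module ℂ A] [TopologicalSpace A]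
    (hA : IsEssential A) {E : Type} [AddCommGroup E] [Module ℂ E] [TopologicalSpace E]
    [T2Space E] {f g : A →L[ℂ] E} (h : ∀ a b, f (a * b) = g (a * b)) : f = g :=
  ContinuousLinearMap.ext_on hA (by rintro _ ⟨a, b, rfl⟩; exact h a b)

section DualProd

variable {X Y : Type} [AddCommGroup X] [Module ℂ X] [TopologicalSpace X]
  [AddCommGroup Y] [Module ℂ Y] [TopologicalSpace Y] [IsTopologicalAddGroup Y]

def ContinuousLinearEquiv.dualProd [ContinuousConstSMul ℂ Y] (e : X ≃L[ℂ] ℂ × Y) :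
    (X →L[ℂ] ℂ) ≃L[ℂ] ℂ × (Y →L[ℂ] ℂ) :=
  (e.arrowCongr (.refl ℂ ℂ)).trans <|
    (ContinuousLinearMap.coprodEquivL ℂ).symm.trans <|
      ContinuousLinearMap.toSpanSingletonCLE.symm.prodCongr (.refl ℂ _)

lemma ContinuousLinearEquiv.dualProd_symm_apply [ContinuousConstSMul ℂ Y] (e : X ≃L[ℂ] ℂ × Y)
    (p : ℂ × (Y →L[ℂ] ℂ)) (x : X) : e.dualProd.symm p x = (e x).1 * p.1 + p.2 (e x).2 := by
  simp [dualProd, mul_comm]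

end DualProd

namespace Unitization

section Splitting

variable (A : Type) [AddCommGroup A] [Module ℂ A] [TopologicalSpace A]

def toProdL : Unitization ℂ A ≃L[ℂ] ℂ × A :=
  { linearEquiv ℂ ℂ A with
    continuous_toFun := continuous_induced_dom
    continuous_invFun := continuous_induced_rng.2 continuous_id }

def inrL : A →L[ℂ] Unitization ℂ A :=
  (toProdL A).symm.toContinuousLinearMap.comp (ContinuousLinearMap.inr ℂ ℂ A)

end Splitting

variable (A : Type) [NonUnitalRing A] [Module ℂ A] [SMulCommClass ℂ A A] [IsScalarTower ℂ A A]
  [TopologicalSpace A] [IsTopologicalAddGroup A] [ContinuousSMul ℂ A] [ContinuousMul A]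

instance : IsTopologicalAddGroup (selfBiMod A).X := inferInstanceAs (IsTopologicalAddGroup A)

instance : ContinuousSMul ℂ (selfBiMod A).X := inferInstanceAs (ContinuousSMul ℂ A)

def iterDualEquiv : ∀ k : ℕ,
    ((selfBiMod (Unitization ℂ A)).iterDual k).X ≃L[ℂ] ℂ × ((selfBiMod A).iterDual k).X
  | 0 => toProdL A
  | k + 1 => (iterDualEquiv k).dualProd

variable {A}

lemma pairApply_iterDualEquiv_symm (k : ℕ) (p : ℂ × ((selfBiMod A).iterDual (k + 1)).X)
    (x : ((selfBiMod (Unitization ℂ A)).iterDual k).X) :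
    (selfBiMod (Unitization ℂ A)).pairApply k ((iterDualEquiv A (k + 1)).symm p) x
      = (iterDualEquiv A k x).1 * p.1 + (selfBiMod A).pairApply k p.2 (iterDualEquiv A k x).2 :=
  ContinuousLinearEquiv.dualProd_symm_apply _ p x

lemma pairApply_eq_iterDualEquiv (k : ℕ)
    (f : ((selfBiMod (Unitization ℂ A)).iterDual (k + 1)).X)
    (x : ((selfBiMod (Unitization ℂ A)).iterDual k).X) :
    (selfBiMod (Unitization ℂ A)).pairApply k f x
      = (iterDualEquiv A k x).1 * (iterDualEquiv A (k + 1) f).1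
        + (selfBiMod A).pairApply k (iterDualEquiv A (k + 1) f).2 (iterDualEquiv A k x).2 := by
  rw [← pairApply_iterDualEquiv_symm, ContinuousLinearEquiv.symm_apply_apply]

lemma iterDualEquiv_succ_eq_iff (k : ℕ) (f : ((selfBiMod (Unitization ℂ A)).iterDual (k + 1)).X)
    (p : ℂ × ((selfBiMod A).iterDual (k + 1)).X) :
    iterDualEquiv A (k + 1) f = p ↔ ∀ x, (selfBiMod (Unitization ℂ A)).pairApply k f x
      = (iterDualEquiv A k x).1 * p.1 + (selfBiMod A).pairApply k p.2 (iterDualEquiv A k x).2 := by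
  rw [← ContinuousLinearEquiv.eq_symm_apply, ← (BiMod.pairApply_injective _ k).eq_iff, funext_iff]
  simp only [pairApply_iterDualEquiv_symm]

def EvenSplitAction (k : ℕ) (κ : A → ((selfBiMod A).iterDual k).X) : Prop :=
  ∀ (s : Bool) (a : A) (x : ((selfBiMod (Unitization ℂ A)).iterDual k).X),
    iterDualEquiv A k (((selfBiMod (Unitization ℂ A)).iterDual k).act s a x)
      = (0, ((selfBiMod A).iterDual k).act s a (iterDualEquiv A k x).2
          + (iterDualEquiv A k x).1 • κ a)

def OddSplitAction (k : ℕ) (κ : A → ((selfBiMod A).iterDual k).X) : Prop :=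
  ∀ (s : Bool) (a : A) (f : ((selfBiMod (Unitization ℂ A)).iterDual (k + 1)).X),
    iterDualEquiv A (k + 1) (((selfBiMod (Unitization ℂ A)).iterDual (k + 1)).act s a f)
      = ((selfBiMod A).pairApply k (iterDualEquiv A (k + 1) f).2 (κ a),
          ((selfBiMod A).iterDual (k + 1)).act s a (iterDualEquiv A (k + 1) f).2)

lemma evenSplitAction_zero : EvenSplitAction 0 (fun a : A => a) := by
  intro s a (u : Unitization ℂ A)
  cases s
  · show ((u * a).fst, (u * a).snd) = (0, u.snd * a + u.fst • a)
    ext <;> simp [add_comm]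
  · show (((a : Unitization ℂ A) * u).fst, ((a : Unitization ℂ A) * u).snd)
      = (0, a * u.snd + u.fst • a)
    ext <;> simp [add_comm]

lemma EvenSplitAction.oddSplitAction {k : ℕ} {κ : A → ((selfBiMod A).iterDual k).X}
    (h : EvenSplitAction k κ) : OddSplitAction k κ := by
  intro s a f
  rw [iterDualEquiv_succ_eq_iff]
  intro x
  rw [BiMod.pairApply_act, pairApply_eq_iterDualEquiv, h]
  simp only [zero_mul, BiMod.pairApply_add_right, BiMod.pairApply_smul_right, zero_add,
    BiMod.pairApply_act]
  ring

lemma OddSplitAction.evenSplitAction {k : ℕ} {κ : A → ((selfBiMod A).iterDual k).X}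
    (h : OddSplitAction k κ) {κ' : A → ((selfBiMod A).iterDual (k + 1 + 1)).X}
    (hκ' : ∀ a f, (selfBiMod A).pairApply (k + 1) (κ' a) f = (selfBiMod A).pairApply k f (κ a)) :
    EvenSplitAction (k + 1 + 1) κ' := by
  intro s a F
  rw [iterDualEquiv_succ_eq_iff]
  intro f
  rw [BiMod.pairApply_act, pairApply_eq_iterDualEquiv, h]
  simp only [mul_zero, BiMod.pairApply_add_left, BiMod.pairApply_act, BiMod.pairApply_smul_left,
    hκ', zero_add]
  ring

lemma evenSplitAction_iterEmbed (m : ℕ) :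
    EvenSplitAction (A := A) (2 * m) ((selfBiMod A).iterEmbed inferInstance m) := by
  induction m with
  | zero => exact evenSplitAction_zero
  | succ m ih => exact ih.oddSplitAction.evenSplitAction fun _ _ => rfl

section Derivation

variable {k : ℕ} {D : Unitization ℂ A →L[ℂ] ((selfBiMod (Unitization ℂ A)).iterDual k).X}

lemma isInnerDerivation_of_forall_inr
    (hD : IsContDerivation (Unitization ℂ A) ((selfBiMod (Unitization ℂ A)).iterDual k) D)
    {x : ((selfBiMod (Unitization ℂ A)).iterDual k).X}
    (hx : ∀ a : A, D a = ((selfBiMod (Unitization ℂ A)).iterDual k).l a x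
      - ((selfBiMod (Unitization ℂ A)).iterDual k).r a x) :
    IsInnerDerivation (Unitization ℂ A) ((selfBiMod (Unitization ℂ A)).iterDual k) D := by
  refine ⟨x, fun u => ?_⟩
  have hu : u = u.fst • 1 + (u.snd : Unitization ℂ A) := by ext <;> simp
  have hscalar (s : Bool) :
      ((selfBiMod (Unitization ℂ A)).iterDual k).act s (u.fst • 1) x = u.fst • x :=
    selfBiMod_iterDual_act_eq_smul (fun _ => smul_one_mul _ _) (fun _ => mul_smul_one _ _) k s x
  have hadd (s : Bool) := selfBiMod_iterDual_act_add k s (u.fst • (1 : Unitization ℂ A)) u.snd x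
  change D u = ((selfBiMod (Unitization ℂ A)).iterDual k).act true u x
    - ((selfBiMod (Unitization ℂ A)).iterDual k).act false u x
  rw [hu, hadd, hadd, hscalar, hscalar, map_add, map_smul, hD.map_one, hx]
  simp only [smul_zero, zero_add, BiMod.act]
  abel

variable (D) in
def restrictInr : A →L[ℂ] ℂ × ((selfBiMod A).iterDual k).X :=
  (iterDualEquiv A k).toContinuousLinearMap ∘L D ∘L inrL A

lemma restrictInr_apply (a : A) : restrictInr D a = iterDualEquiv A k (D a) := rfl

variable {κ : A → ((selfBiMod A).iterDual k).X}

lemma restrictInr_mul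
    (hD : IsContDerivation (Unitization ℂ A) ((selfBiMod (Unitization ℂ A)).iterDual k) D)
    (hκ : EvenSplitAction k κ) (a b : A) :
    restrictInr D (a * b)
      = (0, ((selfBiMod A).iterDual k).l a (restrictInr D b).2 + (restrictInr D b).1 • κ a
          + (((selfBiMod A).iterDual k).r b (restrictInr D a).2 + (restrictInr D a).1 • κ b)) := by
  have hl := hκ true a (D b)
  have hr := hκ false b (D a)
  simp only [BiMod.act] at hl hr
  rw [restrictInr_apply, inr_mul, hD, map_add, hl, hr, Prod.mk_add_mk, add_zero]
  rfl

lemma fst_restrictInr_eq_zero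
    (hD : IsContDerivation (Unitization ℂ A) ((selfBiMod (Unitization ℂ A)).iterDual k) D)
    (hA : IsEssential A) (hκ : EvenSplitAction k κ) (a : A) :
    (restrictInr D a).1 = 0 := by
  have h : ContinuousLinearMap.fst ℂ _ _ ∘L restrictInr D = 0 :=
    hA.ext_of_map_mul fun a b => congrArg Prod.fst (restrictInr_mul hD hκ a b)
  exact congrArg (· a) h

lemma isContDerivation_snd_restrictInr
    (hD : IsContDerivation (Unitization ℂ A) ((selfBiMod (Unitization ℂ A)).iterDual k) D)
    (hκ : EvenSplitAction k κ)
    (h0 : ∀ a, (restrictInr D a).1 = 0) :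
    IsContDerivation A ((selfBiMod A).iterDual k)
      (ContinuousLinearMap.snd ℂ _ _ ∘L restrictInr D) := by
  intro a b
  simp [restrictInr_mul hD hκ, h0]

lemma isInnerDerivation_of_snd_restrictInr
    (hD : IsContDerivation (Unitization ℂ A) ((selfBiMod (Unitization ℂ A)).iterDual k) D)
    (hκ : EvenSplitAction k κ)
    (h0 : ∀ a, (restrictInr D a).1 = 0)
    (hinner : IsInnerDerivation A ((selfBiMod A).iterDual k)
      (ContinuousLinearMap.snd ℂ _ _ ∘L restrictInr D)) :
    IsInnerDerivation (Unitization ℂ A) ((selfBiMod (Unitization ℂ A)).iterDual k) D := by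
  obtain ⟨F, hF⟩ := hinner
  refine isInnerDerivation_of_forall_inr hD (x := (iterDualEquiv A k).symm (0, F)) fun a => ?_
  apply (iterDualEquiv A k).injective
  have hl := hκ true a ((iterDualEquiv A k).symm (0, F))
  have hr := hκ false a ((iterDualEquiv A k).symm (0, F))
  simp only [BiMod.act, ContinuousLinearEquiv.apply_symm_apply] at hl hr
  rw [map_sub, hl, hr, ← restrictInr_apply]
  ext
  · simp [h0]
  · simpa using hF a

end Derivation

end Unitization

theorem unitization_even_weaklyAmenable_of_selfInduced_general (A : Type) [NonUnitalRing A] [Module ℂ A] [SMulCommClass ℂ A A]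
    [IsScalarTower ℂ A A] [UniformSpace A] [IsUniformAddGroup A] [ContinuousSMul ℂ A]
    [ContinuousMul A]
    (hself : SelfInduced A) (n : ℕ)
    (h : NWeaklyAmenable A (2 * n)) : NWeaklyAmenable (Unitization ℂ A) (2 * n) := by
  intro D hD
  have hκ := Unitization.evenSplitAction_iterEmbed (A := A) n
  have h0 := Unitization.fst_restrictInr_eq_zero hD hself.1 hκ
  exact Unitization.isInnerDerivation_of_snd_restrictInr hD hκ h0
    (h _ (Unitization.isContDerivation_snd_restrictInr hD hκ h0))

/-- If a self-induced Fréchet algebra `A` is `2n`-weakly amenable, then its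
unitization `A#` is `2n`-weakly amenable. -/
theorem unitization_even_weaklyAmenable_of_selfInduced (A : Type) [NonUnitalRing A] [Module ℂ A] [SMulCommClass ℂ A A]
    [IsScalarTower ℂ A A] [UniformSpace A] [IsUniformAddGroup A] [ContinuousSMul ℂ A]
    [ContinuousMul A] [CompleteSpace A] [T2Space A] (hA : FrechetSeminorms A)
    (hself : SelfInduced A) (n : ℕ)
    (h : NWeaklyAmenable A (2 * n)) : NWeaklyAmenable (Unitization ℂ A) (2 * n) :=
  unitization_even_weaklyAmenable_of_selfInduced_general A hself n h
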